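/- arXiv:2605.02495 — 4 statements merged into one kernel-verified Lean document; each statement's English description precedes it below -/
import Mathlib

section
/- Let V ∈ ℝ^{d×n} with columns vᵢ satisfying ‖vᵢ‖₂ ≤ B, g† ∈ ℝ^d, and M > 0. Suppose x* ∈ {0,1}ⁿ has ‖x*‖₀ = K* and ‖Vx* + g†‖₂ ≤ R. Let z^opt ∈ ℤⁿ minimize ‖Vz + g†‖₂² + M²‖z‖₂² over ℤⁿ. If 3M² > 2B(R + M√K*) + B², then every coordinate satisfies |z^opt_i| ≤ 1, i.e., z^opt ∈ {-1,0,1}ⁿ. -/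
set_option maxHeartbeats 1000000


open Finset

theorem binary_coeff_bound_lattice {d n : ℕ}
    (v : Fin n → EuclideanSpace ℝ (Fin d)) (B M R : ℝ)
    (hB : ∀ i, ‖v i‖ ≤ B) (hM : 0 < M)
    (g : EuclideanSpace ℝ (Fin d))
    (xs : Fin n → ℝ) (hxs : ∀ i, xs i = 0 ∨ xs i = 1)
    (Ks : ℕ) (hKs : (Finset.univ.filter fun i => xs i ≠ 0).card = Ks)
    (hres : ‖(∑ i, xs i • v i) + g‖ ≤ R)
    (zopt : Fin n → ℤ)
    (hopt : ∀ z : Fin n → ℤ,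
      ‖(∑ i, (zopt i : ℝ) • v i) + g‖ ^ 2 + M ^ 2 * ∑ i, ((zopt i : ℝ)) ^ 2
        ≤ ‖(∑ i, (z i : ℝ) • v i) + g‖ ^ 2 + M ^ 2 * ∑ i, ((z i : ℝ)) ^ 2)
    (hsep : 2 * B * (R + M * Real.sqrt Ks) + B ^ 2 < 3 * M ^ 2) :
    ∀ i, |zopt i| ≤ 1 := by
  intro j
  by_contra hj
  push_neg at hj
  have hj2 : 2 ≤ |zopt j| := hj
  have hB0 : 0 ≤ B := le_trans (norm_nonneg _) (hB j)
  have hR0 : 0 ≤ R := le_trans (norm_nonneg _) hres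
  set r := (∑ i, (zopt i : ℝ) • v i) + g with hr
  set P := ∑ i, ((zopt i : ℝ)) ^ 2 with hP
  -- comparison with the binary vector xs
  have hzx := hopt (fun i => if xs i = 0 then (0:ℤ) else 1)
  push_cast at hzx
  have hxeq : (∑ i, (if xs i = 0 then (0:ℝ) else 1) • v i) = ∑ i, xs i • v i := by
    refine Finset.sum_congr rfl fun i _ => ?_
    rcases hxs i with h | h <;> simp [h]
  have hxsq : (∑ i, (if xs i = 0 then (0:ℝ) else 1) ^ 2) = (Ks : ℝ) := by
    rw [← hKs]
    rw [Finset.card_filter]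
    push_cast
    refine Finset.sum_congr rfl fun i _ => ?_
    rcases hxs i with h | h <;> simp [h]
  rw [hxeq, hxsq] at hzx
  have hres2 : ‖(∑ i, xs i • v i) + g‖ ^ 2 ≤ R ^ 2 := by
    have := norm_nonneg ((∑ i, xs i • v i) + g)
    nlinarith
  have hPnn : 0 ≤ P := Finset.sum_nonneg fun i _ => sq_nonneg _
  have hsK : 0 ≤ Real.sqrt Ks := Real.sqrt_nonneg _
  have hsK2 : Real.sqrt Ks ^ 2 = (Ks : ℝ) := Real.sq_sqrt (by positivity)
  have hrle : ‖r‖ ≤ R + M * Real.sqrt Ks := by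
    have h1 : ‖r‖ ^ 2 ≤ (R + M * Real.sqrt Ks) ^ 2 := by
      nlinarith [hzx, hres2, hPnn, hsK2, mul_nonneg hR0 (mul_nonneg hM.le hsK), sq_nonneg M]
    nlinarith [norm_nonneg r, mul_nonneg hM.le hsK]
  -- the decremented vector
  set s : ℤ := if 0 ≤ zopt j then 1 else -1 with hs
  have hzs : (zopt j) * s = |zopt j| := by
    rcases le_or_gt 0 (zopt j) with h | h
    · rw [hs, if_pos h, abs_of_nonneg h, mul_one]
    · rw [hs, if_neg (not_le.mpr h), abs_of_neg h]; ring
  have hs1 : s = 1 ∨ s = -1 := by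
    rcases le_or_gt 0 (zopt j) with h | h
    · left; rw [hs, if_pos h]
    · right; rw [hs, if_neg (not_le.mpr h)]
  set z' : Fin n → ℤ := fun i => if i = j then zopt j - s else zopt i with hz'
  have hzsum : (∑ i, ((z' i : ℝ)) • v i) = (∑ i, ((zopt i : ℝ)) • v i) - (s : ℝ) • v j := by
    have : ∀ i ∈ Finset.univ, ((z' i : ℝ)) • v i
        = ((zopt i : ℝ)) • v i - (if i = j then (s : ℝ) • v i else 0) := by
      intro i _
      by_cases h : i = j <;> simp [hz', h, sub_smul]
    rw [Finset.sum_congr rfl this, Finset.sum_sub_distrib, Finset.sum_ite_eq' Finset.univ j]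
    simp
  have hzsq : (∑ i, ((z' i : ℝ)) ^ 2) = P - ((zopt j : ℝ)) ^ 2 + ((zopt j : ℝ) - (s : ℝ)) ^ 2 := by
    have : ∀ i ∈ Finset.univ, ((z' i : ℝ)) ^ 2
        = ((zopt i : ℝ)) ^ 2 + (if i = j then ((zopt j : ℝ) - (s : ℝ)) ^ 2 - ((zopt j : ℝ)) ^ 2 else 0) := by
      intro i _
      by_cases h : i = j <;> simp [hz', h]
    rw [Finset.sum_congr rfl this, Finset.sum_add_distrib, Finset.sum_ite_eq' Finset.univ j]
    simp [hP]; ring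
  have hopt' := hopt z'
  rw [hzsum, hzsq] at hopt'
  -- penalty decrease
  have hpen : ((zopt j : ℝ) - (s : ℝ)) ^ 2 ≤ ((zopt j : ℝ)) ^ 2 - 3 := by
    have h1 : ((zopt j : ℝ)) * (s : ℝ) = |(zopt j : ℝ)| := by
      rw [← Int.cast_abs, ← hzs]; push_cast; ring
    have h2 : (2 : ℝ) ≤ |(zopt j : ℝ)| := by rw [← Int.cast_abs]; exact_mod_cast hj2
    have h3 : ((s : ℝ)) ^ 2 = 1 := by rcases hs1 with h | h <;> simp [h]
    nlinarith
  -- residual increase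
  have hnorm : ‖(∑ i, ((zopt i : ℝ)) • v i) - (s : ℝ) • v j + g‖ ≤ ‖r‖ + B := by
    have h1 : (∑ i, ((zopt i : ℝ)) • v i) - (s : ℝ) • v j + g = r - (s : ℝ) • v j := by
      rw [hr]; abel
    rw [h1]
    refine le_trans (norm_sub_le _ _) ?_
    have : ‖(s : ℝ) • v j‖ = ‖v j‖ := by
      rw [norm_smul]
      rcases hs1 with h | h <;> simp [h]
    rw [this]
    exact add_le_add le_rfl (hB j)
  have hnorm2 : ‖(∑ i, ((zopt i : ℝ)) • v i) - (s : ℝ) • v j + g‖ ^ 2 ≤ (‖r‖ + B) ^ 2 := by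
    nlinarith [norm_nonneg ((∑ i, ((zopt i : ℝ)) • v i) - (s : ℝ) • v j + g)]
  nlinarith [hopt', hpen, hnorm2, hrle, norm_nonneg r, sq_nonneg M, hM]
end

section
/- Under the setting of the coefficient-bound lemma (columns bounded by B, feasible binary x* with support size K* and residual ≤ R), if additionally z is restricted to nonnegative integers ℤ₊ⁿ and M satisfies 3M² > 2B(R + M√K*) + B², then any minimizer z^opt of ‖Vz + g†‖₂² + M²‖z‖₂² over ℤ₊ⁿ lies in {0,1}ⁿ and satisfies ‖Vz^opt + g†‖₂² + M²‖z^opt‖₂² ≤ R² + M²K*. -/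
/-!
Comparing with the binary point `x*` bounds the optimal value by `R² + M² K*`, hence the residual
`u = V z_opt + g†` has norm at most `R + M √K*`. If some coordinate of `z_opt` were at least `2`,
lowering it by one would change the objective by `-2⟪u, vᵢ⟫ + ‖vᵢ‖² + M² (1 - 2 zᵢ)`, which is at most
`2 B (R + M √K*) + B² - 3 M² < 0`; this contradicts optimality, and nonnegativity leaves only `0` and `1`.
-/

open Finset

namespace LatticeObjective

variable {ι E : Type*} [Fintype ι] [NormedAddCommGroup E] [InnerProductSpace ℝ E]

def residual (v : ι → E) (g : E) (z : ι → ℝ) : E := ∑ i, z i • v i + g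

def value (v : ι → E) (g : E) (M : ℝ) (z : ι → ℝ) : ℝ :=
  ‖residual v g z‖ ^ 2 + M ^ 2 * ∑ i, z i ^ 2

variable (v : ι → E) (g : E) (M : ℝ)

theorem norm_residual_le_of_value_le {R K : ℝ} {z : ι → ℝ} (hR : 0 ≤ R) (hM : 0 ≤ M)
    (hK : 0 ≤ K) (h : value v g M z ≤ R ^ 2 + M ^ 2 * K) :
    ‖residual v g z‖ ≤ R + M * √K := by
  have hsumsq : 0 ≤ M ^ 2 * ∑ i, z i ^ 2 := by positivity
  have hcross : 0 ≤ R * (M * √K) := by positivity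
  refine le_of_pow_le_pow_left₀ two_ne_zero (by positivity) ?_
  calc ‖residual v g z‖ ^ 2 ≤ R ^ 2 + M ^ 2 * K := by unfold value at h; linarith
    _ ≤ (R + M * √K) ^ 2 := by rw [add_sq, mul_pow, Real.sq_sqrt hK]; linarith

variable [DecidableEq ι]

theorem residual_sub_single (z : ι → ℝ) (i : ι) :
    residual v g (z - Pi.single i 1) = residual v g z - v i := by
  simp only [residual, Pi.sub_apply, sub_smul, Finset.sum_sub_distrib, Pi.single_apply,
    ite_smul, one_smul, zero_smul, Finset.sum_ite_eq', Finset.mem_univ, if_true]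
  abel

theorem sum_sq_sub_single (z : ι → ℝ) (i : ι) :
    ∑ j, (z - Pi.single i 1 : ι → ℝ) j ^ 2 = ∑ j, z j ^ 2 + (1 - 2 * z i) := by
  have hpoint : ∀ j, (z - Pi.single i 1 : ι → ℝ) j ^ 2 = z j ^ 2 + (Pi.single i (1 - 2 * z i) : ι → ℝ) j := by
    intro j
    rcases eq_or_ne j i with rfl | hj
    · simp only [Pi.sub_apply, Pi.single_eq_same]; ring
    · simp [Pi.single_eq_of_ne hj]
  simp only [hpoint, Finset.sum_add_distrib, Finset.sum_pi_single', Finset.mem_univ, if_true]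

theorem value_sub_single (z : ι → ℝ) (i : ι) :
    value v g M (z - Pi.single i 1) =
      value v g M z - 2 * inner ℝ (residual v g z) (v i) + ‖v i‖ ^ 2 + M ^ 2 * (1 - 2 * z i) := by
  rw [value, value, residual_sub_single, sum_sq_sub_single, norm_sub_sq_real]
  ring

theorem value_sub_single_lt {B ρ : ℝ} {z : ι → ℝ} {i : ι} (hz : 2 ≤ z i) (hv : ‖v i‖ ≤ B)
    (hr : ‖residual v g z‖ ≤ ρ) (hsep : 2 * B * ρ + B ^ 2 < 3 * M ^ 2) :
    value v g M (z - Pi.single i 1) < value v g M z := by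
  have hinner : -(ρ * B) ≤ inner ℝ (residual v g z) (v i) :=
    calc -(ρ * B) ≤ -(‖residual v g z‖ * ‖v i‖) :=
          neg_le_neg (mul_le_mul hr hv (norm_nonneg _) ((norm_nonneg _).trans hr))
      _ ≤ inner ℝ (residual v g z) (v i) := neg_le_of_abs_le (abs_real_inner_le_norm _ _)
  have hvsq : ‖v i‖ ^ 2 ≤ B ^ 2 := pow_le_pow_left₀ (norm_nonneg _) hv 2
  have hpen : M ^ 2 * (1 - 2 * z i) ≤ -3 * M ^ 2 := by nlinarith [sq_nonneg M]
  rw [value_sub_single]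
  linarith

end LatticeObjective

theorem natCast_sub_single {ι : Type*} [DecidableEq ι] {z : ι → ℕ} {i : ι} (hz : 1 ≤ z i) :
    (fun j => ((z - Pi.single i 1 : ι → ℕ) j : ℝ)) = (fun j => (z j : ℝ)) - Pi.single i 1 := by
  funext j
  rcases eq_or_ne j i with rfl | hj
  · simp [Nat.cast_sub hz]
  · simp [Pi.single_eq_of_ne hj]

theorem sum_sq_eq_card_of_binary {ι : Type*} [Fintype ι] {x : ι → ℝ}
    (hx : ∀ i, x i = 0 ∨ x i = 1) : ∑ i, x i ^ 2 = #{i | x i ≠ 0} := by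
  rw [Finset.natCast_card_filter]
  refine Finset.sum_congr rfl fun i _ => ?_
  rcases hx i with h | h <;> simp [h]

theorem exists_natCast_eq_of_binary {ι : Type*} {x : ι → ℝ} (hx : ∀ i, x i = 0 ∨ x i = 1) :
    ∃ z : ι → ℕ, (fun i => (z i : ℝ)) = x := by
  refine ⟨fun i => if x i = 0 then 0 else 1, funext fun i => ?_⟩
  rcases hx i with h | h <;> simp [h]

open LatticeObjective in
theorem binary_optimality_nonneg_lattice {d n : ℕ}
    (v : Fin n → EuclideanSpace ℝ (Fin d)) (B M R : ℝ)
    (hB : ∀ i, ‖v i‖ ≤ B) (hM : 0 < M)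
    (g : EuclideanSpace ℝ (Fin d))
    (xs : Fin n → ℝ) (hxs : ∀ i, xs i = 0 ∨ xs i = 1)
    (Ks : ℕ) (hKs : (Finset.univ.filter fun i => xs i ≠ 0).card = Ks)
    (hres : ‖(∑ i, xs i • v i) + g‖ ≤ R)
    (zopt : Fin n → ℕ)
    (hopt : ∀ z : Fin n → ℕ,
      ‖(∑ i, (zopt i : ℝ) • v i) + g‖ ^ 2 + M ^ 2 * ∑ i, ((zopt i : ℝ)) ^ 2
        ≤ ‖(∑ i, (z i : ℝ) • v i) + g‖ ^ 2 + M ^ 2 * ∑ i, ((z i : ℝ)) ^ 2)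
    (hsep : 2 * B * (R + M * Real.sqrt Ks) + B ^ 2 < 3 * M ^ 2) :
    (∀ i, zopt i = 0 ∨ zopt i = 1) ∧
    ‖(∑ i, (zopt i : ℝ) • v i) + g‖ ^ 2 + M ^ 2 * ∑ i, ((zopt i : ℝ)) ^ 2
      ≤ R ^ 2 + M ^ 2 * (Ks : ℝ) := by
  have hopt' : ∀ z : Fin n → ℕ,
      value v g M (fun i => (zopt i : ℝ)) ≤ value v g M fun i => (z i : ℝ) := hopt
  obtain ⟨xn, hxn⟩ := exists_natCast_eq_of_binary hxs
  have hval : value v g M (fun i => (zopt i : ℝ)) ≤ R ^ 2 + M ^ 2 * Ks := by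
    refine (hopt' xn).trans ?_
    rw [hxn, value, sum_sq_eq_card_of_binary hxs, hKs]
    gcongr
    exact hres
  have hu := norm_residual_le_of_value_le v g M (norm_nonneg _ |>.trans hres) hM.le
    (Nat.cast_nonneg Ks) hval
  refine ⟨fun i => ?_, hval⟩
  by_contra hbin
  have h2 : (2 : ℝ) ≤ zopt i := by exact_mod_cast (by omega : 2 ≤ zopt i)
  have hlt := value_sub_single_lt v g M h2 (hB i) hu hsep
  rw [← natCast_sub_single (by omega : 1 ≤ zopt i)] at hlt
  exact hlt.not_ge (hopt' _)
end

section
/- For any M > 0, there exist n ≥ 1, d ≥ 1, a matrix V ∈ ℝ^{d×n}, and a nonzero g† ∈ ℝ^d such that: (i) there is x* ∈ {0,1}ⁿ with ‖x*‖₀ = 1 and Vx* = -g†, but (ii) the unique minimizer of F_M(x) = ‖Vx + g†‖₂² + M²·1ᵀx over {0,1}ⁿ is x̂ = 0, which is infeasible for the exact constraint. Concretely, take ‖g†‖₂ = M/2 and v₁ = -g†. -/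
/-!
Take `d = n = 1`, `g = (M/2) e₀` and `v₁ = -g`. Then `x* = 1` solves `V x* = -g` exactly, yet
`F_M(0) = ‖g‖² = M²/4`, whereas every nonzero binary `x` pays at least `M²` in the penalty term
alone, so `0` is the unique minimiser of `F_M` although `V·0 + g = g ≠ 0`.
-/

open Finset

theorem one_le_sum_of_forall_eq_zero_or_eq_one {ι : Type*} [Fintype ι] {x : ι → ℝ}
    (hx : ∀ i, x i = 0 ∨ x i = 1) (hx0 : x ≠ 0) : 1 ≤ ∑ i, x i := by
  obtain ⟨j, hj⟩ := Function.ne_iff.mp hx0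
  have hx_nonneg (i : ι) : 0 ≤ x i := by rcases hx i with h | h <;> simp [h]
  calc (1 : ℝ) = x j := ((hx j).resolve_left hj).symm
    _ ≤ ∑ i, x i := single_le_sum (fun i _ => hx_nonneg i) (mem_univ j)

theorem sq_norm_lt_penalized_residual {ι E : Type*} [Fintype ι] [SeminormedAddCommGroup E]
    [Module ℝ E] {M : ℝ} (hM : 0 < M) {g : E} (hg : ‖g‖ = M / 2) (v : ι → E) {x : ι → ℝ}
    (hx : ∀ i, x i = 0 ∨ x i = 1) (hx0 : x ≠ 0) :
    ‖g‖ ^ 2 < ‖∑ i, x i • v i + g‖ ^ 2 + M ^ 2 * ∑ i, x i := by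
  have hsum := one_le_sum_of_forall_eq_zero_or_eq_one hx hx0
  rw [hg]
  nlinarith [sq_nonneg ‖∑ i, x i • v i + g‖, mul_pos hM hM]

theorem no_universal_M_counterexample (M : ℝ) (hM : 0 < M) :
    ∃ (n d : ℕ) (hn : 1 ≤ n) (_ : 1 ≤ d),
      ∃ (v : Fin n → EuclideanSpace ℝ (Fin d)) (g : EuclideanSpace ℝ (Fin d)),
        g ≠ 0 ∧ ‖g‖ = M / 2 ∧ v ⟨0, hn⟩ = -g ∧
        (∃ xs : Fin n → ℝ, (∀ i, xs i = 0 ∨ xs i = 1) ∧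
          (Finset.univ.filter fun i => xs i ≠ 0).card = 1 ∧
          (∑ i, xs i • v i) = -g) ∧
        (∀ x : Fin n → ℝ, (∀ i, x i = 0 ∨ x i = 1) → x ≠ 0 →
          ‖(∑ i : Fin n, (0 : ℝ) • v i) + g‖ ^ 2 + M ^ 2 * ∑ i : Fin n, (0 : ℝ)
            < ‖(∑ i, x i • v i) + g‖ ^ 2 + M ^ 2 * ∑ i, x i) ∧
        (∑ i : Fin n, (0 : ℝ) • v i) + g ≠ 0 := by
  set g : EuclideanSpace ℝ (Fin 1) := PiLp.single 2 0 (M / 2)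
  have hg : ‖g‖ = M / 2 := by rw [PiLp.norm_single, Real.norm_of_nonneg (by positivity)]
  have hg0 : g ≠ 0 := norm_ne_zero_iff.mp (by rw [hg]; positivity)
  refine ⟨1, 1, le_rfl, le_rfl, fun _ => -g, g, hg0, hg, rfl,
    ⟨fun _ => 1, fun _ => Or.inr rfl, by simp, by simp⟩, fun x hx hx0 => ?_, by simpa using hg0⟩
  simpa only [zero_smul, sum_const_zero, zero_add, mul_zero, add_zero]
    using sq_norm_lt_penalized_residual hM hg _ hx hx0
end

section
/- Let Ω, Γ ⊆ {1,...,n} with Γ ⊊ Ω, and let vᵢ ∈ ℝ^d with b ≤ ‖vᵢ‖₂ ≤ B, uᵢ = vᵢ/‖vᵢ‖₂, and |⟨uᵢ,uⱼ⟩| ≤ μ for i ≠ j. Set w := Σ_{j∈Ω\Γ} vⱼ and m := |Ω\Γ|. Then: (a) max_{i∈Ω\Γ} |⟨uᵢ, w⟩| ≥ b - (m-1)μB; and (b) for any i ∉ Ω, |⟨uᵢ, w⟩| ≤ m·μ·B. -/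
open scoped RealInnerProductSpace
open Finset

theorem on_off_support_correlation_bounds {d n : ℕ}
    (v : Fin n → EuclideanSpace ℝ (Fin d))
    (b B μ : ℝ) (hb : 0 < b)
    (hbB : ∀ i, b ≤ ‖v i‖ ∧ ‖v i‖ ≤ B)
    (hμ : ∀ i j, i ≠ j → |⟪‖v i‖⁻¹ • v i, ‖v j‖⁻¹ • v j⟫| ≤ μ)
    (Ω Γ : Finset (Fin n)) (hΓΩ : Γ ⊂ Ω) :
    (∃ i ∈ Ω \ Γ,
      b - (((Ω \ Γ).card : ℝ) - 1) * μ * B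
        ≤ |⟪‖v i‖⁻¹ • v i, ∑ j ∈ Ω \ Γ, v j⟫|) ∧
    ∀ i, i ∉ Ω →
      |⟪‖v i‖⁻¹ • v i, ∑ j ∈ Ω \ Γ, v j⟫| ≤ ((Ω \ Γ).card : ℝ) * μ * B := by
  classical
  have hpos : ∀ i, (0:ℝ) < ‖v i‖ := fun i => lt_of_lt_of_le hb (hbB i).1
  have hself : ∀ i, ⟪‖v i‖⁻¹ • v i, v i⟫ = ‖v i‖ := by
    intro i
    rw [real_inner_smul_left, real_inner_self_eq_norm_sq]
    field_simp [pow_two]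
  have hBnn : (0:ℝ) ≤ B := by
    obtain ⟨x, hxΩ, hxΓ⟩ := Finset.exists_of_ssubset hΓΩ
    exact le_trans (le_trans hb.le (hbB x).1) (hbB x).2
  have hcross : ∀ i j, i ≠ j → |⟪‖v i‖⁻¹ • v i, v j⟫| ≤ μ * B := by
    intro i j hij
    have h1 : ⟪‖v i‖⁻¹ • v i, v j⟫
        = ‖v j‖ * ⟪‖v i‖⁻¹ • v i, ‖v j‖⁻¹ • v j⟫ := by
      rw [real_inner_smul_right, ← mul_assoc, mul_inv_cancel₀ (hpos j).ne', one_mul]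
    rw [h1, abs_mul, abs_of_pos (hpos j), mul_comm μ B]
    exact mul_le_mul (hbB j).2 (hμ i j hij) (abs_nonneg _) hBnn
  obtain ⟨x, hxΩ, hxΓ⟩ := Finset.exists_of_ssubset hΓΩ
  have hxS : x ∈ Ω \ Γ := Finset.mem_sdiff.mpr ⟨hxΩ, hxΓ⟩
  constructor
  · refine ⟨x, hxS, ?_⟩
    have hexp : ⟪‖v x‖⁻¹ • v x, ∑ j ∈ Ω \ Γ, v j⟫
        = ‖v x‖ + ∑ j ∈ (Ω \ Γ).erase x, ⟪‖v x‖⁻¹ • v x, v j⟫ := by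
      rw [inner_sum, ← Finset.add_sum_erase _ _ hxS, hself]
    have hT : |∑ j ∈ (Ω \ Γ).erase x, ⟪‖v x‖⁻¹ • v x, v j⟫|
        ≤ (((Ω \ Γ).erase x).card : ℝ) * (μ * B) := by
      calc |∑ j ∈ (Ω \ Γ).erase x, ⟪‖v x‖⁻¹ • v x, v j⟫|
          ≤ ∑ j ∈ (Ω \ Γ).erase x, |⟪‖v x‖⁻¹ • v x, v j⟫| :=
            Finset.abs_sum_le_sum_abs _ _
        _ ≤ ((Ω \ Γ).erase x).card • (μ * B) :=
            Finset.sum_le_card_nsmul _ _ _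
              (fun j hj => hcross x j (Finset.ne_of_mem_erase hj).symm)
        _ = (((Ω \ Γ).erase x).card : ℝ) * (μ * B) := by
            rw [nsmul_eq_mul]
    have hcard : (((Ω \ Γ).erase x).card : ℝ) = ((Ω \ Γ).card : ℝ) - 1 := by
      rw [Finset.card_erase_of_mem hxS, Nat.cast_sub (Finset.one_le_card.mpr ⟨x, hxS⟩)]
      simp
    rw [hcard] at hT
    have := le_abs_self (⟪‖v x‖⁻¹ • v x, ∑ j ∈ Ω \ Γ, v j⟫)
    have hlb : b - (((Ω \ Γ).card : ℝ) - 1) * μ * B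
        ≤ ⟪‖v x‖⁻¹ • v x, ∑ j ∈ Ω \ Γ, v j⟫ := by
      rw [hexp]
      have := neg_abs_le (∑ j ∈ (Ω \ Γ).erase x, ⟪‖v x‖⁻¹ • v x, v j⟫)
      have hbx := (hbB x).1
      nlinarith [hT]
    linarith
  · intro i hi
    have hne : ∀ j ∈ Ω \ Γ, i ≠ j := by
      intro j hj h
      exact hi (h ▸ (Finset.mem_sdiff.mp hj).1)
    calc |⟪‖v i‖⁻¹ • v i, ∑ j ∈ Ω \ Γ, v j⟫|
        = |∑ j ∈ Ω \ Γ, ⟪‖v i‖⁻¹ • v i, v j⟫| := by rw [inner_sum]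
      _ ≤ ∑ j ∈ Ω \ Γ, |⟪‖v i‖⁻¹ • v i, v j⟫| := Finset.abs_sum_le_sum_abs _ _
      _ ≤ (Ω \ Γ).card • (μ * B) :=
          Finset.sum_le_card_nsmul _ _ _ (fun j hj => hcross i j (hne j hj))
      _ = ((Ω \ Γ).card : ℝ) * μ * B := by rw [nsmul_eq_mul, mul_assoc]
end
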